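/- arXiv:2306.13168 — 3 statements merged into one kernel-verified Lean document; each statement's English description precedes it below -/
import Mathlib

section
/- Let m ≥ 1 and let A₁, …, A_m be elements of 𝔄. Then for every positive integer n, ‖exp(∑_{j=1}^m A_j) − gₙ({A_j})‖ ≤ (1/(3n²)) · (∑_{j=1}^m ‖A_j‖)³ · exp(∑_{j=1}^m ‖A_j‖). -/
open Filter NormedSpace

/-- The Jordan product `a ∘ b = (ab + ba)/2` on a normed algebra over `𝕜`. -/
noncomputable def jordanMul (𝕜 : Type*) [RCLike 𝕜] {𝔄 : Type*} [NormedRing 𝔄]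
    [NormedAlgebra 𝕜 𝔄] (a b : 𝔄) : 𝔄 :=
  (2 : 𝕜)⁻¹ • (a * b + b * a)

/-- `gProd 𝕜 A m n` is the left-nested Jordan product
`((exp(A₁/n) ∘ exp(A₂/n)) ∘ ⋯ ) ∘ exp(A_m/n)`, where the elements are `A 1, …, A m`. -/
noncomputable def gProd (𝕜 : Type*) [RCLike 𝕜] {𝔄 : Type*} [NormedRing 𝔄]
    [NormedAlgebra 𝕜 𝔄] (A : ℕ → 𝔄) (m n : ℕ) : 𝔄 :=
  (((List.range' 1 m).map fun j => exp ((n : 𝕜)⁻¹ • A j)).foldl (jordanMul 𝕜) 1)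

section SuzukiAux

open Nat

set_option linter.unusedSectionVars false
set_option linter.unusedVariables false

variable {𝕜 : Type*} [RCLike 𝕜] {𝔄 : Type*} [NormedRing 𝔄] [NormedAlgebra 𝕜 𝔄]

lemma real_exp_tail (r : ℝ) :
    ∑' k : ℕ, r ^ (k + 3) / (k + 3)! = Real.exp r - 1 - r - r ^ 2 / 2 := by
  have hs := Real.summable_pow_div_factorial r
  have h := Summable.sum_add_tsum_nat_add 3 hs
  have hexp : Real.exp r = ∑' n : ℕ, r ^ n / n ! := by
    rw [Real.exp_eq_exp_ℝ]; exact congrFun exp_eq_tsum_div r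
  rw [hexp, ← h]
  simp [Finset.sum_range_succ, Nat.factorial]
  ring

lemma jordan_add_left (x y z : 𝔄) :
    jordanMul 𝕜 (x + y) z = jordanMul 𝕜 x z + jordanMul 𝕜 y z := by
  simp only [jordanMul, add_mul, mul_add, ← smul_add]; congr 1; abel

lemma jordan_add_right (x y z : 𝔄) :
    jordanMul 𝕜 x (y + z) = jordanMul 𝕜 x y + jordanMul 𝕜 x z := by
  simp only [jordanMul, add_mul, mul_add, ← smul_add]; congr 1; abel

lemma jordan_one_left (x : 𝔄) : jordanMul 𝕜 1 x = x := by
  simp only [jordanMul, one_mul, mul_one]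
  rw [← two_smul 𝕜 x, smul_smul]
  norm_num

lemma norm_two_inv : ‖(2:𝕜)⁻¹‖ = 2⁻¹ := by
  rw [norm_inv, RCLike.norm_ofNat]

lemma norm_jordan_le (x y : 𝔄) : ‖jordanMul 𝕜 x y‖ ≤ ‖x‖ * ‖y‖ := by
  rw [jordanMul, norm_smul, norm_two_inv]
  have h1 := norm_mul_le x y
  have h2 := norm_mul_le y x
  have h := norm_add_le (x*y) (y*x)
  nlinarith [norm_nonneg (x*y + y*x)]

lemma jordan_P2_P2 (T b : 𝔄) :
    jordanMul 𝕜 (1 + T + (2:𝕜)⁻¹ • T ^ 2) (1 + b + (2:𝕜)⁻¹ • b ^ 2)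
      = (1 + (T + b) + (2:𝕜)⁻¹ • (T + b) ^ 2)
        + (((2:𝕜)⁻¹*(2:𝕜)⁻¹) • (T * (b * b) + b * (b * T) + T * (T * b) + b * (T * T))
          + ((2:𝕜)⁻¹*(2:𝕜)⁻¹*(2:𝕜)⁻¹) • (T * (T * (b * b)) + b * (b * (T * T)))) := by
  simp only [jordanMul, pow_two, mul_add, add_mul, one_mul, mul_one, smul_add,
    mul_smul_comm, smul_mul_assoc, smul_smul, mul_assoc]
  module


variable [CompleteSpace 𝔄]

set_option maxHeartbeats 1000000 in
lemma exp_sub_P2_norm_le (a : 𝔄) {r : ℝ} (ha : ‖a‖ ≤ r) :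
    ‖exp a - (1 + a + (2:𝕜)⁻¹ • a ^ 2)‖ ≤ Real.exp r - 1 - r - r ^ 2 / 2 := by
  have hs : Summable fun k : ℕ => (k !⁻¹ : 𝕜) • a ^ k := expSeries_summable' a
  have hexp : exp a = (∑ i ∈ Finset.range 3, (i !⁻¹ : 𝕜) • a ^ i)
      + ∑' k : ℕ, ((k + 3)!⁻¹ : 𝕜) • a ^ (k + 3) := by
    rw [exp_eq_tsum 𝕜]; exact (Summable.sum_add_tsum_nat_add 3 hs).symm
  have hsum3 : (∑ i ∈ Finset.range 3, (i !⁻¹ : 𝕜) • a ^ i) = 1 + a + (2:𝕜)⁻¹ • a ^ 2 := by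
    simp [Finset.sum_range_succ, Nat.factorial]
  have hnormsum : Summable fun k : ℕ => ‖((k + 3)!⁻¹ : 𝕜) • a ^ (k + 3)‖ :=
    (summable_nat_add_iff 3).mpr (norm_expSeries_summable' (𝕂 := 𝕜) a)
  have htailsum : Summable fun k : ℕ => r ^ (k + 3) / (k + 3)! :=
    (summable_nat_add_iff 3).mpr (Real.summable_pow_div_factorial r)
  have hterm : ∀ k : ℕ, ‖((k + 3)!⁻¹ : 𝕜) • a ^ (k + 3)‖ ≤ r ^ (k + 3) / (k + 3)! := by
    intro k
    rw [norm_smul, norm_inv, RCLike.norm_natCast, div_eq_inv_mul]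
    gcongr
    exact le_trans (norm_pow_le' a (by positivity))
      (pow_le_pow_left₀ (norm_nonneg a) ha _)
  rw [hexp, hsum3, add_sub_cancel_left, ← real_exp_tail r]
  exact le_trans (norm_tsum_le_tsum_norm hnormsum) (Summable.tsum_le_tsum hterm hnormsum htailsum)

lemma norm_mul_exp_le {𝕜 : Type*} [RCLike 𝕜] [NormedAlgebra 𝕜 𝔄] (w b : 𝔄) : ‖w * exp b‖ ≤ ‖w‖ * Real.exp ‖b‖ := by
  have hs : Summable fun k : ℕ => (k !⁻¹ : 𝕜) • b ^ k := expSeries_summable' b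
  have hmul : w * exp b = ∑' k : ℕ, w * ((k !⁻¹ : 𝕜) • b ^ k) := by
    rw [exp_eq_tsum 𝕜]; exact (hs.tsum_mul_left w).symm
  have h1 : Summable fun k : ℕ => ‖w * ((k !⁻¹ : 𝕜) • b ^ k)‖ :=
    Summable.of_nonneg_of_le (fun _ => norm_nonneg _) (fun k => norm_mul_le _ _)
      ((norm_expSeries_summable' (𝕂 := 𝕜) b).mul_left ‖w‖)
  have h2 : ∀ k : ℕ, ‖w * ((k !⁻¹ : 𝕜) • b ^ k)‖ ≤ ‖w‖ * (‖b‖ ^ k / k !) := by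
    intro k
    rcases k with _ | k
    · simp
    refine le_trans (norm_mul_le _ _) (mul_le_mul_of_nonneg_left ?_ (norm_nonneg w))
    rw [norm_smul, norm_inv, RCLike.norm_natCast, div_eq_inv_mul]
    exact mul_le_mul_of_nonneg_left (norm_pow_le' b (Nat.succ_pos k)) (by positivity)
  have hexp : Real.exp ‖b‖ = ∑' k : ℕ, ‖b‖ ^ k / k ! := by
    rw [Real.exp_eq_exp_ℝ]; exact congrFun exp_eq_tsum_div ‖b‖
  rw [hmul, hexp, ← tsum_mul_left]
  exact le_trans (norm_tsum_le_tsum_norm h1)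
    (Summable.tsum_le_tsum h2 h1 ((Real.summable_pow_div_factorial ‖b‖).mul_left ‖w‖))

lemma norm_exp_mul_le {𝕜 : Type*} [RCLike 𝕜] [NormedAlgebra 𝕜 𝔄] (b w : 𝔄) : ‖exp b * w‖ ≤ Real.exp ‖b‖ * ‖w‖ := by
  have hs : Summable fun k : ℕ => (k !⁻¹ : 𝕜) • b ^ k := expSeries_summable' b
  have hmul : exp b * w = ∑' k : ℕ, ((k !⁻¹ : 𝕜) • b ^ k) * w := by
    rw [exp_eq_tsum 𝕜]; exact (hs.tsum_mul_right w).symm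
  have h1 : Summable fun k : ℕ => ‖((k !⁻¹ : 𝕜) • b ^ k) * w‖ :=
    Summable.of_nonneg_of_le (fun _ => norm_nonneg _) (fun k => norm_mul_le _ _)
      ((norm_expSeries_summable' (𝕂 := 𝕜) b).mul_right ‖w‖)
  have h2 : ∀ k : ℕ, ‖((k !⁻¹ : 𝕜) • b ^ k) * w‖ ≤ ‖b‖ ^ k / k ! * ‖w‖ := by
    intro k
    rcases k with _ | k
    · simp
    refine le_trans (norm_mul_le _ _) (mul_le_mul_of_nonneg_right ?_ (norm_nonneg w))
    rw [norm_smul, norm_inv, RCLike.norm_natCast, div_eq_inv_mul]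
    exact mul_le_mul_of_nonneg_left (norm_pow_le' b (Nat.succ_pos k)) (by positivity)
  have hexp : Real.exp ‖b‖ = ∑' k : ℕ, ‖b‖ ^ k / k ! := by
    rw [Real.exp_eq_exp_ℝ]; exact congrFun exp_eq_tsum_div ‖b‖
  rw [hmul, hexp, ← tsum_mul_right]
  exact le_trans (norm_tsum_le_tsum_norm h1)
    (Summable.tsum_le_tsum h2 h1 ((Real.summable_pow_div_factorial ‖b‖).mul_right ‖w‖))

lemma two_tail_le (t : ℝ) (ht : 0 ≤ t) :
    2 * (Real.exp t - 1 - t - t ^ 2 / 2) ≤ t ^ 3 / 3 * Real.exp t := by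
  have htail := real_exp_tail t
  have hexp : Real.exp t = ∑' k : ℕ, t ^ k / k ! := by
    rw [Real.exp_eq_exp_ℝ]; exact congrFun exp_eq_tsum_div t
  have hs1 : Summable fun k : ℕ => 2 * (t ^ (k + 3) / (k + 3)!) :=
    ((summable_nat_add_iff 3).mpr (Real.summable_pow_div_factorial t)).mul_left 2
  have hs2 : Summable fun k : ℕ => t ^ 3 / 3 * (t ^ k / k !) :=
    (Real.summable_pow_div_factorial t).mul_left _
  have hterm : ∀ k : ℕ, 2 * (t ^ (k + 3) / (k + 3)!) ≤ t ^ 3 / 3 * (t ^ k / k !) := by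
    intro k
    have hfact : (6 : ℝ) * k ! ≤ (k + 3)! := by
      have h6 : 6 * k ! ≤ (k + 3)! := by
        have h3 : (k + 3)! = (k + 3) * ((k + 2) * ((k + 1) * k !)) := rfl
        rw [h3]
        calc 6 * k ! = 3 * (2 * (1 * k !)) := by ring
          _ ≤ (k + 3) * ((k + 2) * ((k + 1) * k !)) :=
            Nat.mul_le_mul (by omega) (Nat.mul_le_mul (by omega)
              (Nat.mul_le_mul (by omega) le_rfl))
      exact_mod_cast h6
    have hk3 : (0:ℝ) < (k + 3)! := by positivity
    have hk : (0:ℝ) < k ! := by positivity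
    have e1 : 2 * (t ^ (k + 3) / (k + 3)!) = t ^ (k + 3) * (2 / (k + 3)!) := by ring
    have e2 : t ^ 3 / 3 * (t ^ k / k !) = t ^ (k + 3) * (1 / (3 * k !)) := by ring
    have hc : (2:ℝ) / (k + 3)! ≤ 1 / (3 * k !) := by
      rw [div_le_div_iff₀ hk3 (by positivity)]
      linarith
    rw [e1, e2]
    exact mul_le_mul_of_nonneg_left hc (by positivity)
  have := Summable.tsum_le_tsum hterm hs1 hs2
  rw [tsum_mul_left, tsum_mul_left, htail, ← hexp] at this
  linarith [this]

lemma fold_succ_eq (B : ℕ → 𝔄) (m : ℕ) :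
    ((List.range' 1 (m + 1)).map fun j => exp (B j)).foldl (jordanMul 𝕜) 1
      = jordanMul 𝕜 (((List.range' 1 m).map fun j => exp (B j)).foldl (jordanMul 𝕜) 1)
          (exp (B (m + 1))) := by
  rw [List.range'_1_concat, List.map_append, List.foldl_append]
  simp [Nat.add_comm 1 m]

lemma fold_mul_norm (B : ℕ → 𝔄) (m : ℕ) : ∀ z : 𝔄,
    ‖z * ((List.range' 1 m).map fun j => exp (B j)).foldl (jordanMul 𝕜) 1‖
      ≤ ‖z‖ * Real.exp (∑ j ∈ Finset.Icc 1 m, ‖B j‖) := by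
  induction m with
  | zero => intro z; simp
  | succ m ih =>
    intro z
    rw [fold_succ_eq, Finset.sum_Icc_succ_top (by omega), Real.exp_add]
    set G := ((List.range' 1 m).map fun j => exp (B j)).foldl (jordanMul 𝕜) 1 with hG
    set E := exp (B (m + 1)) with hE
    have hzj : z * jordanMul 𝕜 G E = (2:𝕜)⁻¹ • (z * G * E + z * E * G) := by
      simp only [jordanMul, mul_smul_comm, mul_add, mul_assoc]
    have h1 : ‖z * G * E‖ ≤ ‖z‖ * Real.exp (∑ j ∈ Finset.Icc 1 m, ‖B j‖) * Real.exp ‖B (m+1)‖ := by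
      refine le_trans (norm_mul_exp_le (𝕜 := 𝕜) _ _) ?_
      exact mul_le_mul_of_nonneg_right (ih z) (Real.exp_nonneg _)
    have h2 : ‖z * E * G‖ ≤ ‖z‖ * Real.exp ‖B (m+1)‖ * Real.exp (∑ j ∈ Finset.Icc 1 m, ‖B j‖) := by
      refine le_trans (ih (z * E)) ?_
      exact mul_le_mul_of_nonneg_right (norm_mul_exp_le (𝕜 := 𝕜) z _) (Real.exp_nonneg _)
    rw [hzj, norm_smul, norm_two_inv]
    have := norm_add_le (z * G * E) (z * E * G)
    have hexp0 := Real.exp_nonneg (∑ j ∈ Finset.Icc 1 m, ‖B j‖)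
    nlinarith [norm_nonneg (z * G * E + z * E * G)]

set_option maxHeartbeats 1000000 in
lemma key_bound (B : ℕ → 𝔄) (m : ℕ) :
    ‖((List.range' 1 m).map fun j => exp (B j)).foldl (jordanMul 𝕜) 1
        - (1 + (∑ j ∈ Finset.Icc 1 m, B j) + (2:𝕜)⁻¹ • (∑ j ∈ Finset.Icc 1 m, B j) ^ 2)‖
      ≤ Real.exp (∑ j ∈ Finset.Icc 1 m, ‖B j‖) - 1 - (∑ j ∈ Finset.Icc 1 m, ‖B j‖)
        - (∑ j ∈ Finset.Icc 1 m, ‖B j‖) ^ 2 / 2 := by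
  induction m with
  | zero => simp
  | succ m ih =>
    rw [fold_succ_eq, Finset.sum_Icc_succ_top (by omega : 1 ≤ m + 1),
      Finset.sum_Icc_succ_top (by omega : 1 ≤ m + 1)]
    set G := ((List.range' 1 m).map fun j => exp (B j)).foldl (jordanMul 𝕜) 1 with hG
    set T : 𝔄 := ∑ j ∈ Finset.Icc 1 m, B j with hT
    set t : ℝ := ∑ j ∈ Finset.Icc 1 m, ‖B j‖ with ht
    set b : 𝔄 := B (m + 1) with hb
    set E := exp b with hE
    set P : 𝔄 := 1 + T + (2:𝕜)⁻¹ • T ^ 2 with hP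
    set Q : 𝔄 := 1 + b + (2:𝕜)⁻¹ • b ^ 2 with hQ
    set R : 𝔄 := G - P with hR
    set ρ : 𝔄 := E - Q with hρ
    -- basic facts
    have hT_le : ‖T‖ ≤ t := norm_sum_le _ _
    have ht0 : (0:ℝ) ≤ t := Finset.sum_nonneg fun _ _ => norm_nonneg _
    have hβ0 : (0:ℝ) ≤ ‖b‖ := norm_nonneg b
    have hRle : ‖R‖ ≤ Real.exp t - 1 - t - t ^ 2 / 2 := ih
    have hρle : ‖ρ‖ ≤ Real.exp ‖b‖ - 1 - ‖b‖ - ‖b‖ ^ 2 / 2 := exp_sub_P2_norm_le b le_rfl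
    -- decomposition
    have hGE : jordanMul 𝕜 G E = jordanMul 𝕜 P Q + (jordanMul 𝕜 P ρ + jordanMul 𝕜 R E) := by
      have h1 : G = P + R := by rw [hR]; abel
      rw [h1, jordan_add_left]
      have h2 : E = Q + ρ := by rw [hρ]; abel
      rw [h2, jordan_add_right]
      abel
    have hPρ : jordanMul 𝕜 P ρ = ρ + jordanMul 𝕜 (T + (2:𝕜)⁻¹ • T ^ 2) ρ := by
      have : P = 1 + (T + (2:𝕜)⁻¹ • T ^ 2) := by rw [hP, add_assoc]
      rw [this, jordan_add_left, jordan_one_left]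
    set D : 𝔄 := ((2:𝕜)⁻¹*(2:𝕜)⁻¹) • (T * (b * b) + b * (b * T) + T * (T * b) + b * (T * T))
        + ((2:𝕜)⁻¹*(2:𝕜)⁻¹*(2:𝕜)⁻¹) • (T * (T * (b * b)) + b * (b * (T * T))) with hD
    have hdiff : jordanMul 𝕜 G E - (1 + (T + b) + (2:𝕜)⁻¹ • (T + b) ^ 2)
        = D + (ρ + jordanMul 𝕜 (T + (2:𝕜)⁻¹ • T ^ 2) ρ + jordanMul 𝕜 R E) := by
      rw [hGE, hPρ, jordan_P2_P2, hD]
      abel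
    -- norm bounds
    have hEβ0 : (0:ℝ) ≤ Real.exp ‖b‖ - 1 - ‖b‖ - ‖b‖ ^ 2 / 2 := le_trans (norm_nonneg ρ) hρle
    have hEt0 : (0:ℝ) ≤ Real.exp t - 1 - t - t ^ 2 / 2 := le_trans (norm_nonneg R) hRle
    have n3 : ∀ x y z : 𝔄, ‖x * (y * z)‖ ≤ ‖x‖ * (‖y‖ * ‖z‖) := fun x y z =>
      le_trans (norm_mul_le _ _) (mul_le_mul_of_nonneg_left (norm_mul_le _ _) (norm_nonneg _))
    have n4 : ∀ x y z w : 𝔄, ‖x * (y * (z * w))‖ ≤ ‖x‖ * (‖y‖ * (‖z‖ * ‖w‖)) := fun x y z w =>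
      le_trans (norm_mul_le _ _) (mul_le_mul_of_nonneg_left (n3 _ _ _) (norm_nonneg _))
    have hDle : ‖D‖ ≤ 4⁻¹ * (‖T‖*(‖b‖*‖b‖) + ‖b‖*(‖b‖*‖T‖) + ‖T‖*(‖T‖*‖b‖) + ‖b‖*(‖T‖*‖T‖))
        + 8⁻¹ * (‖T‖*(‖T‖*(‖b‖*‖b‖)) + ‖b‖*(‖b‖*(‖T‖*‖T‖))) := by
      have e4 : ‖(((2:𝕜)⁻¹*(2:𝕜)⁻¹))‖ = (4:ℝ)⁻¹ := by
        rw [norm_mul, norm_two_inv]; norm_num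
      have e8 : ‖(((2:𝕜)⁻¹*(2:𝕜)⁻¹*(2:𝕜)⁻¹))‖ = (8:ℝ)⁻¹ := by
        rw [norm_mul, norm_mul, norm_two_inv]; norm_num
      have h4 : ‖T*(b*b) + b*(b*T) + T*(T*b) + b*(T*T)‖
          ≤ ‖T‖*(‖b‖*‖b‖) + ‖b‖*(‖b‖*‖T‖) + ‖T‖*(‖T‖*‖b‖) + ‖b‖*(‖T‖*‖T‖) := by
        have g1 := norm_add_le (T*(b*b) + b*(b*T) + T*(T*b)) (b*(T*T))
        have g2 := norm_add_le (T*(b*b) + b*(b*T)) (T*(T*b))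
        have g3 := norm_add_le (T*(b*b)) (b*(b*T))
        have := n3 T b b; have := n3 b b T; have := n3 T T b; have := n3 b T T
        linarith
      have h2 : ‖T*(T*(b*b)) + b*(b*(T*T))‖ ≤ ‖T‖*(‖T‖*(‖b‖*‖b‖)) + ‖b‖*(‖b‖*(‖T‖*‖T‖)) := by
        have g1 := norm_add_le (T*(T*(b*b))) (b*(b*(T*T)))
        have := n4 T T b b; have := n4 b b T T
        linarith
      refine le_trans (norm_add_le _ _) ?_
      rw [norm_smul, norm_smul, e4, e8]
      have : (0:ℝ) ≤ 4⁻¹ := by norm_num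
      have : (0:ℝ) ≤ 8⁻¹ := by norm_num
      gcongr
    have p1 : ‖D‖ ≤ 4⁻¹ * (t*(‖b‖*‖b‖) + ‖b‖*(‖b‖*t) + t*(t*‖b‖) + ‖b‖*(t*t))
        + 8⁻¹ * (t*(t*(‖b‖*‖b‖)) + ‖b‖*(‖b‖*(t*t))) := by
      refine le_trans hDle ?_
      have h0 := norm_nonneg T
      gcongr <;> first | exact hT_le | positivity
    have p3 : ‖jordanMul 𝕜 (T + (2:𝕜)⁻¹ • T ^ 2) ρ‖
        ≤ (t + t ^ 2 / 2) * (Real.exp ‖b‖ - 1 - ‖b‖ - ‖b‖ ^ 2 / 2) := by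
      refine le_trans (norm_jordan_le _ _) ?_
      refine mul_le_mul ?_ hρle (norm_nonneg _) (by positivity)
      have g1 := norm_add_le T ((2:𝕜)⁻¹ • T ^ 2)
      have g2 : ‖(2:𝕜)⁻¹ • T ^ 2‖ = 2⁻¹ * ‖T ^ 2‖ := by rw [norm_smul, norm_two_inv]
      have g3 : ‖T ^ 2‖ ≤ ‖T‖ ^ 2 := norm_pow_le' T (by norm_num)
      nlinarith [norm_nonneg T]
    have p4 : ‖jordanMul 𝕜 R E‖ ≤ (Real.exp t - 1 - t - t ^ 2 / 2) * Real.exp ‖b‖ := by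
      have g0 : jordanMul 𝕜 R E = (2:𝕜)⁻¹ • (R * E + E * R) := rfl
      rw [g0, norm_smul, norm_two_inv]
      have g1 := norm_add_le (R * E) (E * R)
      have g2 : ‖R * E‖ ≤ ‖R‖ * Real.exp ‖b‖ := norm_mul_exp_le (𝕜 := 𝕜) R b
      have g3 : ‖E * R‖ ≤ Real.exp ‖b‖ * ‖R‖ := norm_exp_mul_le (𝕜 := 𝕜) b R
      have g4 := Real.exp_nonneg ‖b‖
      nlinarith [norm_nonneg R]
    calc ‖jordanMul 𝕜 G E - (1 + (T + b) + (2:𝕜)⁻¹ • (T + b) ^ 2)‖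
        = ‖D + (ρ + jordanMul 𝕜 (T + (2:𝕜)⁻¹ • T ^ 2) ρ + jordanMul 𝕜 R E)‖ := by rw [hdiff]
      _ ≤ ‖D‖ + (‖ρ‖ + ‖jordanMul 𝕜 (T + (2:𝕜)⁻¹ • T ^ 2) ρ‖ + ‖jordanMul 𝕜 R E‖) :=
          le_trans (norm_add_le _ _) (by gcongr; exact norm_add₃_le)
      _ ≤ (4⁻¹ * (t*(‖b‖*‖b‖) + ‖b‖*(‖b‖*t) + t*(t*‖b‖) + ‖b‖*(t*t))
            + 8⁻¹ * (t*(t*(‖b‖*‖b‖)) + ‖b‖*(‖b‖*(t*t))))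
          + ((Real.exp ‖b‖ - 1 - ‖b‖ - ‖b‖ ^ 2 / 2)
            + (t + t ^ 2 / 2) * (Real.exp ‖b‖ - 1 - ‖b‖ - ‖b‖ ^ 2 / 2)
            + (Real.exp t - 1 - t - t ^ 2 / 2) * Real.exp ‖b‖) :=
          add_le_add p1 (add_le_add (add_le_add hρle p3) p4)
      _ = Real.exp (t + ‖b‖) - 1 - (t + ‖b‖) - (t + ‖b‖) ^ 2 / 2 := by
          rw [Real.exp_add]; ring

lemma pow_sub_pow_bound (X Y : 𝔄) (ρ δ : ℝ)
    (hX : ∀ z : 𝔄, ‖X * z‖ ≤ ρ * ‖z‖) (hY : ∀ z : 𝔄, ‖z * Y‖ ≤ ‖z‖ * ρ)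
    (hρ : 0 ≤ ρ) (hXY : ‖X - Y‖ ≤ δ) (k : ℕ) :
    ‖X ^ (k + 1) - Y ^ (k + 1)‖ ≤ (k + 1) * ρ ^ k * δ := by
  have hδ : 0 ≤ δ := le_trans (norm_nonneg _) hXY
  have hYp : ∀ (j : ℕ) (z : 𝔄), ‖z * Y ^ j‖ ≤ ‖z‖ * ρ ^ j := by
    intro j
    induction j with
    | zero => intro z; simp
    | succ j ih =>
      intro z
      rw [pow_succ, ← mul_assoc]
      calc ‖z * Y ^ j * Y‖ ≤ ‖z * Y ^ j‖ * ρ := hY _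
        _ ≤ ‖z‖ * ρ ^ j * ρ := mul_le_mul_of_nonneg_right (ih z) hρ
        _ = ‖z‖ * ρ ^ (j + 1) := by ring
  induction k with
  | zero => simpa using hXY
  | succ k ih =>
    have hsplit : X ^ (k + 2) - Y ^ (k + 2)
        = X * (X ^ (k + 1) - Y ^ (k + 1)) + (X - Y) * Y ^ (k + 1) := by
      have e1 : X * X ^ (k + 1) = X ^ (k + 2) := (pow_succ' X (k + 1)).symm
      have e2 : Y * Y ^ (k + 1) = Y ^ (k + 2) := (pow_succ' Y (k + 1)).symm
      rw [mul_sub, sub_mul, e1, e2]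
      abel
    rw [hsplit]
    calc ‖X * (X ^ (k + 1) - Y ^ (k + 1)) + (X - Y) * Y ^ (k + 1)‖
        ≤ ‖X * (X ^ (k + 1) - Y ^ (k + 1))‖ + ‖(X - Y) * Y ^ (k + 1)‖ := norm_add_le _ _
      _ ≤ ρ * ((k + 1) * ρ ^ k * δ) + δ * ρ ^ (k + 1) := by
          refine add_le_add (le_trans (hX _) (mul_le_mul_of_nonneg_left ih hρ)) ?_
          exact le_trans (hYp (k + 1) (X - Y)) (mul_le_mul_of_nonneg_right hXY (by positivity))
      _ ≤ (↑(k + 1) + 1) * ρ ^ (k + 1) * δ := by push_cast; ring_nf; nlinarith [pow_nonneg hρ k]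

end SuzukiAux

set_option maxHeartbeats 1000000 in
theorem suzuki_gProd_estimate (𝕜 : Type*) [RCLike 𝕜] {𝔄 : Type*} [NormedRing 𝔄]
    [NormedAlgebra 𝕜 𝔄] [CompleteSpace 𝔄] (m : ℕ) (hm : 1 ≤ m) (A : ℕ → 𝔄)
    (n : ℕ) (hn : 0 < n) :
    ‖exp (∑ j ∈ Finset.Icc 1 m, A j) - (gProd 𝕜 A m n) ^ n‖ ≤
      (1 / (3 * (n : ℝ) ^ 2)) * (∑ j ∈ Finset.Icc 1 m, ‖A j‖) ^ 3 *
        Real.exp (∑ j ∈ Finset.Icc 1 m, ‖A j‖) := by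
  have hnR : (0:ℝ) < n := by exact_mod_cast hn
  set s : ℝ := ∑ j ∈ Finset.Icc 1 m, ‖A j‖ with hs
  have hs0 : 0 ≤ s := Finset.sum_nonneg fun _ _ => norm_nonneg _
  set B : ℕ → 𝔄 := fun j => (n : 𝕜)⁻¹ • A j with hB
  set t : ℝ := s / n with htdef
  have ht0 : 0 ≤ t := by positivity
  have htsum : ∑ j ∈ Finset.Icc 1 m, ‖B j‖ = t := by
    rw [htdef, hs, Finset.sum_div]
    refine Finset.sum_congr rfl fun j _ => ?_
    rw [hB]
    simp only []
    rw [norm_smul, norm_inv, RCLike.norm_natCast, div_eq_inv_mul]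
  set S : 𝔄 := ∑ j ∈ Finset.Icc 1 m, A j with hS
  have hTsum : ∑ j ∈ Finset.Icc 1 m, B j = (n : 𝕜)⁻¹ • S := by
    rw [hS, Finset.smul_sum]
  have hTle : ‖(n : 𝕜)⁻¹ • S‖ ≤ t := by
    rw [← hTsum, ← htsum]; exact norm_sum_le _ _
  -- X := exp ((n:𝕜)⁻¹ • S)
  have hXn : exp ((n : 𝕜)⁻¹ • S) ^ n = exp S := by
    letI : NormedAlgebra ℚ 𝔄 := NormedAlgebra.restrictScalars ℚ 𝕜 𝔄
    rw [← exp_nsmul n ((n : 𝕜)⁻¹ • S)]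
    congr 1
    rw [← Nat.cast_smul_eq_nsmul 𝕜, smul_smul,
      mul_inv_cancel₀ (Nat.cast_ne_zero.mpr hn.ne' : (n:𝕜) ≠ 0), one_smul]
  -- δ bound
  have hδ : ‖exp ((n : 𝕜)⁻¹ • S) - gProd 𝕜 A m n‖
      ≤ 2 * (Real.exp t - 1 - t - t ^ 2 / 2) := by
    have h1 : ‖exp ((n : 𝕜)⁻¹ • S) - (1 + (n : 𝕜)⁻¹ • S + (2:𝕜)⁻¹ • ((n : 𝕜)⁻¹ • S) ^ 2)‖
        ≤ Real.exp t - 1 - t - t ^ 2 / 2 := exp_sub_P2_norm_le _ hTle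
    have h2 := key_bound (𝕜 := 𝕜) B m
    rw [htsum, hTsum] at h2
    have h3 : gProd 𝕜 A m n
        = ((List.range' 1 m).map fun j => exp (B j)).foldl (jordanMul 𝕜) 1 := rfl
    have h4 : ‖exp ((n : 𝕜)⁻¹ • S) - gProd 𝕜 A m n‖
        ≤ ‖exp ((n : 𝕜)⁻¹ • S) - (1 + (n : 𝕜)⁻¹ • S + (2:𝕜)⁻¹ • ((n : 𝕜)⁻¹ • S) ^ 2)‖
          + ‖(1 + (n : 𝕜)⁻¹ • S + (2:𝕜)⁻¹ • ((n : 𝕜)⁻¹ • S) ^ 2) - gProd 𝕜 A m n‖ :=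
      norm_sub_le_norm_sub_add_norm_sub _ _ _
    have h5 : ‖(1 + (n : 𝕜)⁻¹ • S + (2:𝕜)⁻¹ • ((n : 𝕜)⁻¹ • S) ^ 2) - gProd 𝕜 A m n‖
        = ‖gProd 𝕜 A m n - (1 + (n : 𝕜)⁻¹ • S + (2:𝕜)⁻¹ • ((n : 𝕜)⁻¹ • S) ^ 2)‖ :=
      norm_sub_rev _ _
    rw [h5, h3] at h4
    rw [h3]
    linarith
  -- telescoping
  obtain ⟨k, rfl⟩ : ∃ k, n = k + 1 := ⟨n - 1, by omega⟩
  have hX : ∀ z : 𝔄, ‖exp ((↑(k+1) : 𝕜)⁻¹ • S) * z‖ ≤ Real.exp t * ‖z‖ := by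
    intro z
    refine le_trans (norm_exp_mul_le (𝕜 := 𝕜) _ _) ?_
    exact mul_le_mul_of_nonneg_right (Real.exp_le_exp.mpr hTle) (norm_nonneg z)
  have hY : ∀ z : 𝔄, ‖z * gProd 𝕜 A m (k+1)‖ ≤ ‖z‖ * Real.exp t := by
    intro z
    have := fold_mul_norm (𝕜 := 𝕜) B m z
    rw [htsum] at this
    exact this
  have htele := pow_sub_pow_bound (exp ((↑(k+1) : 𝕜)⁻¹ • S)) (gProd 𝕜 A m (k+1))
    (Real.exp t) (2 * (Real.exp t - 1 - t - t ^ 2 / 2)) hX hY (Real.exp_nonneg t) hδ k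
  rw [hXn] at htele
  refine le_trans htele ?_
  have h2t := two_tail_le t ht0
  have hρk : (0:ℝ) ≤ Real.exp t ^ k := by positivity
  have step1 : ((k:ℝ) + 1) * Real.exp t ^ k * (2 * (Real.exp t - 1 - t - t ^ 2 / 2))
      ≤ ((k:ℝ) + 1) * Real.exp t ^ k * (t ^ 3 / 3 * Real.exp t) := by
    refine mul_le_mul_of_nonneg_left h2t ?_
    positivity
  refine le_trans step1 (le_of_eq ?_)
  have hts : ((k:ℝ) + 1) * t = s := by
    rw [htdef]
    field_simp
    push_cast; ring
  have hepow : Real.exp t ^ k * Real.exp t = Real.exp s := by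
    rw [← Real.exp_nat_mul, ← Real.exp_add, ← hts]
    push_cast
    ring_nf
  have hnk : ((k:ℝ) + 1) ≠ 0 := by positivity
  have htval : t = s / ((k:ℝ) + 1) := by rw [htdef]; push_cast; ring_nf
  calc ((k:ℝ) + 1) * Real.exp t ^ k * (t ^ 3 / 3 * Real.exp t)
      = ((k:ℝ) + 1) * t ^ 3 / 3 * (Real.exp t ^ k * Real.exp t) := by ring
    _ = ((k:ℝ) + 1) * (s / ((k:ℝ) + 1)) ^ 3 / 3 * Real.exp s := by rw [hepow, ← htval]
    _ = 1 / (3 * ((k:ℝ) + 1) ^ 2) * s ^ 3 * Real.exp s := by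
        field_simp
    _ = 1 / (3 * ((k + 1 : ℕ) : ℝ) ^ 2) * s ^ 3 * Real.exp s := by push_cast; ring
end

section
/- Let m ≥ 1 and let A₁, …, A_m be elements of 𝔄. Then gₙ({A_j}) converges in norm to exp(∑_{j=1}^m A_j) as n → ∞, i.e. lim_{n→∞} ( ((exp(A₁/n) ∘ exp(A₂/n)) ∘ ⋯ ) ∘ exp(A_m/n) )ⁿ = exp(∑_{j=1}^m A_j). -/
/-!
If `n • (uₙ - 1) → S`, then `uₙ ^ n → exp S`: compare `uₙ ^ n` with `exp (S/n) ^ n = exp S` by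
telescoping, `‖uⁿ - vⁿ‖ ≤ n (1 + K/n)ⁿ ‖u - v‖ ≤ e^K ‖n • (u - v)‖`, and note that
`n • (exp (S/n) - 1) → S` because `S` is the derivative of `t ↦ exp (t • S)` at `0`.
The Jordan product of two such sequences has first-order part `S + T`, since
`a ∘ b - 1 = (a - 1) + (b - 1) + ((a - 1)(b - 1) + (b - 1)(a - 1))/2` and the quadratic
terms are `O(1/n²)`. By induction `n • (gₙ - 1) → ∑ Aⱼ`.
-/

open Filter NormedSpace

open Topology

section NormedRing

variable {𝔄 : Type*} [NormedRing 𝔄]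

-- `‖1‖` may exceed `1`, so bounds are phrased through `‖u - 1‖` rather than `‖u‖`.
lemma norm_mul_le_one_add_norm_sub_one_mul (u x : 𝔄) : ‖u * x‖ ≤ (1 + ‖u - 1‖) * ‖x‖ :=
  calc ‖u * x‖ = ‖x + (u - 1) * x‖ := by noncomm_ring
    _ ≤ ‖x‖ + ‖u - 1‖ * ‖x‖ := (norm_add_le _ _).trans (by gcongr; exact norm_mul_le _ _)
    _ = (1 + ‖u - 1‖) * ‖x‖ := by ring

lemma norm_mul_le_one_add_norm_sub_one_mul' (v x : 𝔄) : ‖x * v‖ ≤ (1 + ‖v - 1‖) * ‖x‖ :=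
  calc ‖x * v‖ = ‖x + x * (v - 1)‖ := by noncomm_ring
    _ ≤ ‖x‖ + ‖x‖ * ‖v - 1‖ := (norm_add_le _ _).trans (by gcongr; exact norm_mul_le _ _)
    _ = (1 + ‖v - 1‖) * ‖x‖ := by ring

lemma norm_mul_pow_le_one_add_norm_sub_one_pow_mul (v x : 𝔄) (k : ℕ) :
    ‖x * v ^ k‖ ≤ (1 + ‖v - 1‖) ^ k * ‖x‖ := by
  induction k with
  | zero => simp
  | succ k ih =>
    calc ‖x * v ^ (k + 1)‖ = ‖x * v ^ k * v‖ := by rw [pow_succ, mul_assoc]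
      _ ≤ (1 + ‖v - 1‖) * ((1 + ‖v - 1‖) ^ k * ‖x‖) :=
        (norm_mul_le_one_add_norm_sub_one_mul' v _).trans (by gcongr)
      _ = (1 + ‖v - 1‖) ^ (k + 1) * ‖x‖ := by ring

lemma norm_pow_sub_pow_le_of_norm_sub_one_le {u v : 𝔄} {r : ℝ} (hu : ‖u - 1‖ ≤ r)
    (hv : ‖v - 1‖ ≤ r) (n : ℕ) : ‖u ^ n - v ^ n‖ ≤ n * (1 + r) ^ n * ‖u - v‖ := by
  have hr : 1 ≤ 1 + r := by linarith [norm_nonneg (u - 1)]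
  induction n with
  | zero => simp
  | succ k ih =>
    have hsplit : u ^ (k + 1) - v ^ (k + 1) = u * (u ^ k - v ^ k) + (u - v) * v ^ k := by
      rw [pow_succ', pow_succ']; noncomm_ring
    have hleft : ‖u * (u ^ k - v ^ k)‖ ≤ (1 + r) * (k * (1 + r) ^ k * ‖u - v‖) :=
      (norm_mul_le_one_add_norm_sub_one_mul u _).trans (by gcongr)
    have hright : ‖(u - v) * v ^ k‖ ≤ (1 + r) ^ (k + 1) * ‖u - v‖ := by
      refine (norm_mul_pow_le_one_add_norm_sub_one_pow_mul v _ k).trans ?_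
      gcongr ?_ * _
      calc (1 + ‖v - 1‖) ^ k ≤ (1 + r) ^ k := by gcongr
        _ ≤ (1 + r) ^ (k + 1) := pow_le_pow_right₀ hr k.le_succ
    calc ‖u ^ (k + 1) - v ^ (k + 1)‖
        ≤ (1 + r) * (k * (1 + r) ^ k * ‖u - v‖) + (1 + r) ^ (k + 1) * ‖u - v‖ :=
          hsplit ▸ (norm_add_le _ _).trans (add_le_add hleft hright)
      _ = ↑(k + 1) * (1 + r) ^ (k + 1) * ‖u - v‖ := by push_cast; ring

end NormedRing

section NormedAlgebra

variable {𝕜 : Type*} [RCLike 𝕜] {𝔄 : Type*} [NormedRing 𝔄] [NormedAlgebra 𝕜 𝔄]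

lemma eventually_norm_sub_one_le_div {u : ℕ → 𝔄} {S : 𝔄}
    (hu : Tendsto (fun n : ℕ => (n : 𝕜) • (u n - 1)) atTop (𝓝 S)) :
    ∀ᶠ n : ℕ in atTop, ‖u n - 1‖ ≤ (‖S‖ + 1) / n := by
  filter_upwards [hu.norm.eventually_le_const (lt_add_one ‖S‖), eventually_gt_atTop 0]
    with n hn hpos
  rw [le_div_iff₀ (by exact_mod_cast hpos), mul_comm]
  simpa [norm_smul] using hn

lemma tendsto_pow_sub_pow_of_tendsto_natCast_smul_sub_one {u v : ℕ → 𝔄} {S : 𝔄}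
    (hu : Tendsto (fun n : ℕ => (n : 𝕜) • (u n - 1)) atTop (𝓝 S))
    (hv : Tendsto (fun n : ℕ => (n : 𝕜) • (v n - 1)) atTop (𝓝 S)) :
    Tendsto (fun n : ℕ => u n ^ n - v n ^ n) atTop (𝓝 0) := by
  set K := ‖S‖ + 1
  have hdiff : Tendsto (fun n : ℕ => (n : 𝕜) • (u n - v n)) atTop (𝓝 0) := by
    simpa [← smul_sub] using hu.sub hv
  have hbound : ∀ᶠ n : ℕ in atTop, ‖u n ^ n - v n ^ n‖ ≤ Real.exp K * ‖(n : 𝕜) • (u n - v n)‖ := by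
    filter_upwards [eventually_norm_sub_one_le_div hu, eventually_norm_sub_one_le_div hv,
      eventually_gt_atTop 0] with n hun hvn hpos
    have hn : (n : ℝ) ≠ 0 := by positivity
    have hpow : (1 + K / n) ^ n ≤ Real.exp K :=
      calc (1 + K / n) ^ n ≤ Real.exp (K / n) ^ n := by
            gcongr
            linarith [Real.add_one_le_exp (K / n)]
        _ = Real.exp K := by rw [← Real.exp_nat_mul, mul_div_cancel₀ K hn]
    calc ‖u n ^ n - v n ^ n‖ ≤ n * (1 + K / n) ^ n * ‖u n - v n‖ :=
          norm_pow_sub_pow_le_of_norm_sub_one_le hun hvn n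
      _ ≤ n * Real.exp K * ‖u n - v n‖ := by gcongr
      _ = Real.exp K * ‖(n : 𝕜) • (u n - v n)‖ := by simp [norm_smul]; ring
  rw [tendsto_zero_iff_norm_tendsto_zero]
  exact squeeze_zero' (.of_forall fun _ => norm_nonneg _) hbound
    (by simpa using hdiff.norm.const_mul (Real.exp K))

lemma jordanMul_sub_one (a b : 𝔄) :
    jordanMul 𝕜 a b - 1 =
      (a - 1) + (b - 1) + (2 : 𝕜)⁻¹ • ((a - 1) * (b - 1) + (b - 1) * (a - 1)) := by
  have hab : a * b + b * a =
      ((a - 1) * (b - 1) + (b - 1) * (a - 1)) + (2 : 𝕜) • ((a - 1) + (b - 1) + 1) := by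
    rw [two_smul]; noncomm_ring
  rw [jordanMul, hab, smul_add, inv_smul_smul₀ two_ne_zero]
  abel

lemma tendsto_natCast_smul_jordanMul_sub_one {u v : ℕ → 𝔄} {S T : 𝔄}
    (hu : Tendsto (fun n : ℕ => (n : 𝕜) • (u n - 1)) atTop (𝓝 S))
    (hv : Tendsto (fun n : ℕ => (n : 𝕜) • (v n - 1)) atTop (𝓝 T)) :
    Tendsto (fun n : ℕ => (n : 𝕜) • (jordanMul 𝕜 (u n) (v n) - 1)) atTop (𝓝 (S + T)) := by
  have hv₀ : Tendsto (fun n : ℕ => v n - 1) atTop (𝓝 0) := by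
    refine (zero_smul 𝕜 T ▸ tendsto_inv_atTop_nhds_zero_nat.smul hv).congr' ?_
    filter_upwards [eventually_ne_atTop 0] with n hn
    rw [inv_smul_smul₀ (Nat.cast_ne_zero.2 hn)]
  have hquad := ((hu.mul hv₀).add (hv₀.mul hu)).const_smul (2 : 𝕜)⁻¹
  simp only [mul_zero, zero_mul, add_zero, smul_zero] at hquad
  rw [← add_zero (S + T)]
  refine ((hu.add hv).add hquad).congr fun n => ?_
  simp only [jordanMul_sub_one, smul_add, smul_mul_assoc, mul_smul_comm,
    smul_comm (n : 𝕜) (2 : 𝕜)⁻¹]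

variable [CompleteSpace 𝔄]

lemma tendsto_natCast_smul_exp_inv_smul_sub_one (S : 𝔄) :
    Tendsto (fun n : ℕ => (n : 𝕜) • (exp ((n : 𝕜)⁻¹ • S) - 1)) atTop (𝓝 S) := by
  have hslope := (hasDerivAt_exp_smul_const (𝕂 := 𝕜) S 0).tendsto_slope_zero
  simp only [zero_add, zero_smul, exp_zero, one_mul] at hslope
  have hinv : Tendsto (fun n : ℕ => (n : 𝕜)⁻¹) atTop (𝓝[≠] 0) :=
    tendsto_nhdsWithin_iff.2 ⟨tendsto_inv_atTop_nhds_zero_nat,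
      (eventually_ne_atTop 0).mono fun n hn => by simpa using hn⟩
  simpa [Function.comp_def] using hslope.comp hinv

lemma exp_inv_natCast_smul_pow {n : ℕ} (hn : n ≠ 0) (S : 𝔄) :
    exp ((n : 𝕜)⁻¹ • S) ^ n = exp S := by
  let +nondep : NormedAlgebra ℚ 𝔄 := .restrictScalars ℚ 𝕜 𝔄
  rw [← exp_nsmul, ← Nat.cast_smul_eq_nsmul 𝕜, smul_smul, mul_inv_cancel₀ (by exact_mod_cast hn),
    one_smul]

lemma tendsto_pow_of_tendsto_natCast_smul_sub_one {u : ℕ → 𝔄} {S : 𝔄}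
    (hu : Tendsto (fun n : ℕ => (n : 𝕜) • (u n - 1)) atTop (𝓝 S)) :
    Tendsto (fun n : ℕ => u n ^ n) atTop (𝓝 (exp S)) := by
  have hexp := tendsto_pow_sub_pow_of_tendsto_natCast_smul_sub_one hu
    (tendsto_natCast_smul_exp_inv_smul_sub_one S)
  refine tendsto_sub_nhds_zero_iff.1 (hexp.congr' ?_)
  filter_upwards [eventually_ne_atTop 0] with n hn
  rw [exp_inv_natCast_smul_pow hn]

end NormedAlgebra

lemma gProd_succ (𝕜 : Type*) [RCLike 𝕜] {𝔄 : Type*} [NormedRing 𝔄] [NormedAlgebra 𝕜 𝔄]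
    (A : ℕ → 𝔄) (m n : ℕ) :
    gProd 𝕜 A (m + 1) n = jordanMul 𝕜 (gProd 𝕜 A m n) (exp ((n : 𝕜)⁻¹ • A (m + 1))) := by
  simp [gProd, List.range'_concat, add_comm 1 m]

lemma tendsto_natCast_smul_gProd_sub_one (𝕜 : Type*) [RCLike 𝕜] {𝔄 : Type*} [NormedRing 𝔄]
    [NormedAlgebra 𝕜 𝔄] [CompleteSpace 𝔄] (A : ℕ → 𝔄) (m : ℕ) :
    Tendsto (fun n : ℕ => (n : 𝕜) • (gProd 𝕜 A m n - 1)) atTop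
      (𝓝 (∑ j ∈ Finset.Icc 1 m, A j)) := by
  induction m with
  | zero => simp [gProd]
  | succ m ih =>
    rw [Finset.sum_Icc_succ_top (Nat.le_add_left 1 m)]
    simpa only [gProd_succ] using
      tendsto_natCast_smul_jordanMul_sub_one ih (tendsto_natCast_smul_exp_inv_smul_sub_one _)

theorem lieTrotter_gProd_general (𝕜 : Type*) [RCLike 𝕜] {𝔄 : Type*} [NormedRing 𝔄]
    [NormedAlgebra 𝕜 𝔄] [CompleteSpace 𝔄] (m : ℕ) (A : ℕ → 𝔄) :
    Filter.Tendsto (fun n : ℕ => (gProd 𝕜 A m n) ^ n) Filter.atTop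
      (nhds (exp (∑ j ∈ Finset.Icc 1 m, A j))) :=
  tendsto_pow_of_tendsto_natCast_smul_sub_one (tendsto_natCast_smul_gProd_sub_one 𝕜 A m)

theorem lieTrotter_gProd (𝕜 : Type*) [RCLike 𝕜] {𝔄 : Type*} [NormedRing 𝔄]
    [NormedAlgebra 𝕜 𝔄] [CompleteSpace 𝔄] (m : ℕ) (hm : 1 ≤ m) (A : ℕ → 𝔄) :
    Filter.Tendsto (fun n : ℕ => (gProd 𝕜 A m n) ^ n) Filter.atTop
      (nhds (exp (∑ j ∈ Finset.Icc 1 m, A j))) :=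
  lieTrotter_gProd_general 𝕜 m A
end

section
/- Let A, B be elements of 𝔄. Then the symmetrized Lie–Trotter formula holds: exp(A + B) = lim_{n→∞} ( exp(B/(2n)) · exp(A/n) · exp(B/(2n)) )ⁿ, with the quantitative estimate ‖exp(A + B) − (exp(B/(2n)) exp(A/n) exp(B/(2n)))ⁿ‖ ≤ (1/(3n²)) (‖A‖ + ‖B‖)³ exp(‖A‖ + ‖B‖) for every positive integer n. -/
open Filter NormedSpace

-- scalar tail identity
lemma tail_sum_eq (m : ℕ) (c : ℝ) :
    ∑' k : ℕ, c ^ (k + m) / (Nat.factorial (k + m) : ℝ) = Real.exp c - ∑ k ∈ Finset.range m, c ^ k / (Nat.factorial k : ℝ) := by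
  have h : Summable (fun k : ℕ => c ^ k / (Nat.factorial k : ℝ)) := Real.summable_pow_div_factorial c
  have := Summable.sum_add_tsum_nat_add m h
  rw [Real.exp_eq_exp_ℝ, exp_eq_tsum_div]
  linarith [this]

lemma tail3_le (c : ℝ) (hc : 0 ≤ c) :
    ∑' k : ℕ, c ^ (k + 3) / (Nat.factorial (k + 3) : ℝ) ≤ c ^ 3 / 6 * Real.exp c := by
  have h : Summable (fun k : ℕ => c ^ k / (Nat.factorial k : ℝ)) :=
    Real.summable_pow_div_factorial c
  have h3 : Summable (fun k : ℕ => c ^ (k + 3) / (Nat.factorial (k + 3) : ℝ)) :=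
    (summable_nat_add_iff 3).2 h
  have hb : Summable (fun k : ℕ => c ^ 3 / 6 * (c ^ k / (Nat.factorial k : ℝ))) := h.mul_left _
  have key : ∀ k : ℕ, c ^ (k + 3) / (Nat.factorial (k + 3) : ℝ)
      ≤ c ^ 3 / 6 * (c ^ k / (Nat.factorial k : ℝ)) := by
    intro k
    have hfac : (6 : ℝ) * (Nat.factorial k : ℝ) ≤ (Nat.factorial (k + 3) : ℝ) := by
      have : 6 * Nat.factorial k ≤ Nat.factorial (k + 3) := by
        have h1 : Nat.factorial (k + 3) = (k+3) * ((k+2) * ((k+1) * Nat.factorial k)) := rfl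
        rw [h1]
        calc 6 * Nat.factorial k = 3 * (2 * (1 * Nat.factorial k)) := by ring
          _ ≤ (k+3) * ((k+2) * ((k+1) * Nat.factorial k)) := by
              gcongr <;> omega
      exact_mod_cast this
    have hrw : c ^ 3 / 6 * (c ^ k / (Nat.factorial k : ℝ)) =
        c ^ (k + 3) / (6 * (Nat.factorial k : ℝ)) := by
      rw [pow_add]; ring
    rw [hrw]
    gcongr
  calc ∑' k : ℕ, c ^ (k + 3) / (Nat.factorial (k + 3) : ℝ)
      ≤ ∑' k : ℕ, c ^ 3 / 6 * (c ^ k / (Nat.factorial k : ℝ)) := Summable.tsum_le_tsum key h3 hb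
    _ = c ^ 3 / 6 * ∑' k : ℕ, c ^ k / (Nat.factorial k : ℝ) := tsum_mul_left
    _ = c ^ 3 / 6 * Real.exp c := by
        rw [Real.exp_eq_exp_ℝ, exp_eq_tsum_div]

section Alg
variable (𝕜 : Type*) [RCLike 𝕜] {𝔄 : Type*} [NormedRing 𝔄] [NormedAlgebra 𝕜 𝔄]
  [CompleteSpace 𝔄]

lemma exp_tail_norm (m : ℕ) (hm : 0 < m) (z : 𝔄) (c : ℝ) (hz : ‖z‖ ≤ c) :
    ‖exp z - ∑ k ∈ Finset.range m, (Nat.factorial k : 𝕜)⁻¹ • z ^ k‖ ≤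
      ∑' k : ℕ, c ^ (k + m) / (Nat.factorial (k + m) : ℝ) := by
  have hc : 0 ≤ c := le_trans (norm_nonneg z) hz
  have hs : Summable (fun k : ℕ => (Nat.factorial k : 𝕜)⁻¹ • z ^ k) := expSeries_summable' z
  have h1 : exp z = ∑ k ∈ Finset.range m, (Nat.factorial k : 𝕜)⁻¹ • z ^ k
      + ∑' k : ℕ, (Nat.factorial (k + m) : 𝕜)⁻¹ • z ^ (k + m) := by
    rw [exp_eq_tsum 𝕜]
    exact (Summable.sum_add_tsum_nat_add m hs).symm
  rw [h1, add_sub_cancel_left]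
  have hterm : ∀ k : ℕ, ‖(Nat.factorial (k + m) : 𝕜)⁻¹ • z ^ (k + m)‖ ≤
      c ^ (k + m) / (Nat.factorial (k + m) : ℝ) := by
    intro k
    rw [norm_smul, norm_inv, RCLike.norm_natCast]
    rw [div_eq_inv_mul]
    gcongr
    calc ‖z ^ (k + m)‖ ≤ ‖z‖ ^ (k + m) := norm_pow_le' z (by omega)
      _ ≤ c ^ (k + m) := pow_le_pow_left₀ (norm_nonneg z) hz _
  have hsum : Summable (fun k : ℕ => c ^ (k + m) / (Nat.factorial (k + m) : ℝ)) :=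
    (summable_nat_add_iff m).2 (Real.summable_pow_div_factorial c)
  have hns : Summable (fun k : ℕ => ‖(Nat.factorial (k + m) : 𝕜)⁻¹ • z ^ (k + m)‖) :=
    Summable.of_nonneg_of_le (fun k => norm_nonneg _) hterm hsum
  exact (norm_tsum_le_tsum_norm hns).trans (Summable.tsum_le_tsum hterm hns hsum)

lemma exp_sub_one_norm (𝕜 : Type*) [RCLike 𝕜] [NormedAlgebra 𝕜 𝔄] (z : 𝔄) (c : ℝ) (hz : ‖z‖ ≤ c) :
    ‖exp z - 1‖ ≤ Real.exp c - 1 := by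
  have := exp_tail_norm 𝕜 1 one_pos z c hz
  simp only [Finset.sum_range_one, Nat.factorial_zero, Nat.cast_one, inv_one, one_smul,
    pow_zero] at this
  refine this.trans ?_
  rw [tail_sum_eq 1 c]
  simp [Nat.factorial_zero]

lemma exp_sub_quad_norm (z : 𝔄) (c : ℝ) (hz : ‖z‖ ≤ c) :
    ‖exp z - (1 + z + (2 : 𝕜)⁻¹ • (z * z))‖ ≤ Real.exp c - (1 + c + c ^ 2 / 2) := by
  have h3 := exp_tail_norm 𝕜 3 (by omega) z c hz
  have hq : ∑ k ∈ Finset.range 3, (Nat.factorial k : 𝕜)⁻¹ • z ^ k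
      = 1 + z + (2 : 𝕜)⁻¹ • (z * z) := by
    rw [Finset.sum_range_succ, Finset.sum_range_succ, Finset.sum_range_one]
    norm_num [Nat.factorial, pow_succ]
  rw [hq] at h3
  refine h3.trans ?_
  rw [tail_sum_eq 3 c]
  rw [Finset.sum_range_succ, Finset.sum_range_succ, Finset.sum_range_one]
  norm_num [Nat.factorial]

end Alg

section Local
variable {𝕜 : Type*} [RCLike 𝕜] {𝔄 : Type*} [NormedRing 𝔄] [NormedAlgebra 𝕜 𝔄]
  [CompleteSpace 𝔄]

lemma q_mul_norm (x w : 𝔄) {v t : ℝ} (hx : ‖x‖ ≤ v) (hw : ‖w‖ ≤ t) :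
    ‖(1 + x + (2 : 𝕜)⁻¹ • (x * x)) * w‖ ≤ (1 + v + v ^ 2 / 2) * t := by
  have hv : 0 ≤ v := (norm_nonneg x).trans hx
  have ht : 0 ≤ t := (norm_nonneg w).trans hw
  have h1 : (1 + x + (2 : 𝕜)⁻¹ • (x * x)) * w = w + x * w + (2 : 𝕜)⁻¹ • (x * (x * w)) := by
    simp [add_mul, smul_mul_assoc, mul_assoc]
  rw [h1]
  have h2 : ‖x * w‖ ≤ v * t := norm_mul_le_of_le hx hw
  have h3 : ‖(2 : 𝕜)⁻¹ • (x * (x * w))‖ ≤ v * (v * t) / 2 := by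
    rw [norm_smul, norm_inv, RCLike.norm_two]
    have := norm_mul_le_of_le hx (norm_mul_le_of_le hx hw)
    linarith
  have h4 := norm_add₃_le (a := w) (b := x * w) (c := (2 : 𝕜)⁻¹ • (x * (x * w)))
  nlinarith [h4, h2, h3, hw]

lemma mul_q_norm (x w : 𝔄) {v t : ℝ} (hx : ‖x‖ ≤ v) (hw : ‖w‖ ≤ t) :
    ‖w * (1 + x + (2 : 𝕜)⁻¹ • (x * x))‖ ≤ t * (1 + v + v ^ 2 / 2) := by
  have hv : 0 ≤ v := (norm_nonneg x).trans hx
  have ht : 0 ≤ t := (norm_nonneg w).trans hw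
  have h1 : w * (1 + x + (2 : 𝕜)⁻¹ • (x * x)) = w + w * x + (2 : 𝕜)⁻¹ • (w * (x * x)) := by
    simp [mul_add, mul_smul_comm, mul_assoc]
  rw [h1]
  have h2 : ‖w * x‖ ≤ t * v := norm_mul_le_of_le hw hx
  have h3 : ‖(2 : 𝕜)⁻¹ • (w * (x * x))‖ ≤ t * (v * v) / 2 := by
    rw [norm_smul, norm_inv, RCLike.norm_two]
    have := norm_mul_le_of_le hw (norm_mul_le_of_le hx hx)
    linarith
  have h4 := norm_add₃_le (a := w) (b := w * x) (c := (2 : 𝕜)⁻¹ • (w * (x * x)))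
  nlinarith [h4, h2, h3, hw]

lemma mul_exp_norm {𝕜 : Type*} [RCLike 𝕜] [NormedAlgebra 𝕜 𝔄] (x w : 𝔄) {v t : ℝ} (hx : ‖x‖ ≤ v) (hw : ‖w‖ ≤ t) :
    ‖w * exp x‖ ≤ t * Real.exp v := by
  have ht : 0 ≤ t := (norm_nonneg w).trans hw
  have h1 : w * exp x = w * (exp x - 1) + w := by rw [mul_sub, mul_one, sub_add_cancel]
  rw [h1]
  have h2 : ‖w * (exp x - 1)‖ ≤ t * (Real.exp v - 1) :=
    norm_mul_le_of_le hw (exp_sub_one_norm 𝕜 x v hx)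
  have := norm_add_le (w * (exp x - 1)) w
  nlinarith

lemma local_err {𝕜 : Type*} [RCLike 𝕜] [NormedAlgebra 𝕜 𝔄] (x y : 𝔄) {u v : ℝ} (hx : ‖x‖ ≤ v) (hy : ‖y‖ ≤ u) :
    ‖exp y * exp x * exp y - exp (x + y + y)‖ ≤
      2 * (Real.exp (v + 2 * u) - (1 + (v + 2 * u) + (v + 2 * u) ^ 2 / 2)) := by
  have hu : 0 ≤ u := (norm_nonneg y).trans hy
  have hv : 0 ≤ v := (norm_nonneg x).trans hx
  set a : ℝ := v + 2 * u with ha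
  set qy : 𝔄 := 1 + y + (2 : 𝕜)⁻¹ • (y * y) with hqy
  set qx : 𝔄 := 1 + x + (2 : 𝕜)⁻¹ • (x * x) with hqx
  set z : 𝔄 := x + y + y with hz
  set qz : 𝔄 := 1 + z + (2 : 𝕜)⁻¹ • (z * z) with hqz
  set su : ℝ := 1 + u + u ^ 2 / 2 with hsu
  set sv : ℝ := 1 + v + v ^ 2 / 2 with hsv
  set sa : ℝ := 1 + a + a ^ 2 / 2 with hsa
  set Eu : ℝ := Real.exp u with hEu
  set Ev : ℝ := Real.exp v with hEv
  set Ea : ℝ := Real.exp a with hEa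
  have hEuv : Eu * Ev * Eu = Ea := by
    rw [hEu, hEv, hEa, ← Real.exp_add, ← Real.exp_add]; congr 1; ring
  have hry : ‖exp y - qy‖ ≤ Eu - su := exp_sub_quad_norm 𝕜 y u hy
  have hrx : ‖exp x - qx‖ ≤ Ev - sv := exp_sub_quad_norm 𝕜 x v hx
  have hza : ‖z‖ ≤ a := by
    calc ‖z‖ ≤ ‖x‖ + ‖y‖ + ‖y‖ := norm_add₃_le
      _ ≤ a := by rw [ha]; linarith
  have hrz : ‖exp z - qz‖ ≤ Ea - sa := exp_sub_quad_norm 𝕜 z a hza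
  -- positivity of remainders
  have hry0 : (0:ℝ) ≤ Eu - su := le_trans (norm_nonneg _) hry
  have hrx0 : (0:ℝ) ≤ Ev - sv := le_trans (norm_nonneg _) hrx
  -- Part 1
  have hP1 : exp y * exp x * exp y - qy * qx * qy
      = (exp y - qy) * exp x * exp y + qy * (exp x - qx) * exp y
        + qy * qx * (exp y - qy) := by noncomm_ring
  have b1 : ‖(exp y - qy) * exp x * exp y‖ ≤ (Eu - su) * Ev * Eu :=
    mul_exp_norm (𝕜 := 𝕜) y _ hy (mul_exp_norm (𝕜 := 𝕜) x _ hx hry)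
  have b2 : ‖qy * (exp x - qx) * exp y‖ ≤ su * (Ev - sv) * Eu := by
    refine mul_exp_norm (𝕜 := 𝕜) y _ hy ?_
    rw [hqy]
    exact q_mul_norm y _ hy hrx
  have b3 : ‖qy * qx * (exp y - qy)‖ ≤ su * (sv * (Eu - su)) := by
    rw [mul_assoc, hqy]
    refine q_mul_norm y _ hy ?_
    rw [hqx]
    exact q_mul_norm x _ hx hry
  have bP1 : ‖exp y * exp x * exp y - qy * qx * qy‖ ≤ Eu * Ev * Eu - su * sv * su := by
    rw [hP1]
    have := norm_add₃_le (a := (exp y - qy) * exp x * exp y)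
      (b := qy * (exp x - qx) * exp y) (c := qy * qx * (exp y - qy))
    have hring : (Eu - su) * Ev * Eu + su * (Ev - sv) * Eu + su * (sv * (Eu - su))
        = Eu * Ev * Eu - su * sv * su := by ring
    linarith
  -- Part 2 : polynomial difference
  have hD : qy * qx * qy - qz =
      y*(x*(y)) + (2:𝕜)⁻¹ • (x*(y*(y)) + x*(x*(y)) + y*(y*(y)) + y*(x*(y*(y))) + y*(x*(x)) + y*(x*(x*(y))) + y*(y*(y)) + y*(y*(x)) + y*(y*(x*(y)))) + (4:𝕜)⁻¹ • (x*(x*(y*(y))) + y*(x*(x*(y*(y)))) + y*(y*(y*(y))) + y*(y*(x*(y*(y)))) + y*(y*(x*(x))) + y*(y*(x*(x*(y))))) + (8:𝕜)⁻¹ • (y*(y*(x*(x*(y*(y)))))) := by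
    rw [hqy, hqx, hqz, hz]
    simp only [mul_add, add_mul, one_mul, mul_one, smul_mul_assoc, mul_smul_comm, smul_smul,
      mul_assoc, smul_add]
    module
  have bD : ‖qy * qx * qy - qz‖ ≤ su * sv * su - sa := by
    rw [hD]
    have g0 : ‖y*(x*(y))‖ ≤ u*(v*(u)) := norm_mul_le_of_le hy (norm_mul_le_of_le hx (hy))
    have g1 : ‖x*(y*(y)) + x*(x*(y)) + y*(y*(y)) + y*(x*(y*(y))) + y*(x*(x)) + y*(x*(x*(y))) + y*(y*(y)) + y*(y*(x)) + y*(y*(x*(y)))‖ ≤ v*(u*(u)) + v*(v*(u)) + u*(u*(u)) + u*(v*(u*(u))) + u*(v*(v)) + u*(v*(v*(u))) + u*(u*(u)) + u*(u*(v)) + u*(u*(v*(u))) :=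
      ((norm_add_le _ _).trans (add_le_add ((norm_add_le _ _).trans (add_le_add ((norm_add_le _ _).trans (add_le_add ((norm_add_le _ _).trans (add_le_add ((norm_add_le _ _).trans (add_le_add ((norm_add_le _ _).trans (add_le_add ((norm_add_le _ _).trans (add_le_add ((norm_add_le _ _).trans (add_le_add (norm_mul_le_of_le hx (norm_mul_le_of_le hy (hy))) (norm_mul_le_of_le hx (norm_mul_le_of_le hx (hy))))) (norm_mul_le_of_le hy (norm_mul_le_of_le hy (hy))))) (norm_mul_le_of_le hy (norm_mul_le_of_le hx (norm_mul_le_of_le hy (hy)))))) (norm_mul_le_of_le hy (norm_mul_le_of_le hx (hx))))) (norm_mul_le_of_le hy (norm_mul_le_of_le hx (norm_mul_le_of_le hx (hy)))))) (norm_mul_le_of_le hy (norm_mul_le_of_le hy (hy))))) (norm_mul_le_of_le hy (norm_mul_le_of_le hy (hx))))) (norm_mul_le_of_le hy (norm_mul_le_of_le hy (norm_mul_le_of_le hx (hy))))))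
    have g2 : ‖x*(x*(y*(y))) + y*(x*(x*(y*(y)))) + y*(y*(y*(y))) + y*(y*(x*(y*(y)))) + y*(y*(x*(x))) + y*(y*(x*(x*(y))))‖ ≤ v*(v*(u*(u))) + u*(v*(v*(u*(u)))) + u*(u*(u*(u))) + u*(u*(v*(u*(u)))) + u*(u*(v*(v))) + u*(u*(v*(v*(u)))) :=
      ((norm_add_le _ _).trans (add_le_add ((norm_add_le _ _).trans (add_le_add ((norm_add_le _ _).trans (add_le_add ((norm_add_le _ _).trans (add_le_add ((norm_add_le _ _).trans (add_le_add (norm_mul_le_of_le hx (norm_mul_le_of_le hx (norm_mul_le_of_le hy (hy)))) (norm_mul_le_of_le hy (norm_mul_le_of_le hx (norm_mul_le_of_le hx (norm_mul_le_of_le hy (hy))))))) (norm_mul_le_of_le hy (norm_mul_le_of_le hy (norm_mul_le_of_le hy (hy)))))) (norm_mul_le_of_le hy (norm_mul_le_of_le hy (norm_mul_le_of_le hx (norm_mul_le_of_le hy (hy))))))) (norm_mul_le_of_le hy (norm_mul_le_of_le hy (norm_mul_le_of_le hx (hx)))))) (norm_mul_le_of_le hy (norm_mul_le_of_le hy (norm_mul_le_of_le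 hx (norm_mul_le_of_le hx (hy)))))))
    have g3 : ‖y*(y*(x*(x*(y*(y)))))‖ ≤ u*(u*(v*(v*(u*(u))))) :=
      (norm_mul_le_of_le hy (norm_mul_le_of_le hy (norm_mul_le_of_le hx (norm_mul_le_of_le hx (norm_mul_le_of_le hy (hy))))))
    have n1 : ‖(2:𝕜)⁻¹‖ = (2:ℝ)⁻¹ := by rw [norm_inv, RCLike.norm_two]
    have n2 : ‖(4:𝕜)⁻¹‖ = (4:ℝ)⁻¹ := by rw [norm_inv, RCLike.norm_ofNat]
    have n3 : ‖(8:𝕜)⁻¹‖ = (8:ℝ)⁻¹ := by rw [norm_inv, RCLike.norm_ofNat]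
    have hB : u*(v*(u)) + (v*(u*(u)) + v*(v*(u)) + u*(u*(u)) + u*(v*(u*(u))) + u*(v*(v)) + u*(v*(v*(u))) + u*(u*(u)) + u*(u*(v)) + u*(u*(v*(u)))) / 2 + (v*(v*(u*(u))) + u*(v*(v*(u*(u)))) + u*(u*(u*(u))) + u*(u*(v*(u*(u)))) + u*(u*(v*(v))) + u*(u*(v*(v*(u))))) / 4 + (u*(u*(v*(v*(u*(u)))))) / 8 = su * sv * su - sa := by
      rw [hsu, hsv, hsa, ha]; ring
    rw [← hB]
    refine le_trans ((norm_add_le _ _).trans (add_le_add ((norm_add_le _ _).trans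
      (add_le_add (norm_add_le _ _) le_rfl)) le_rfl)) ?_
    rw [norm_smul, norm_smul, norm_smul, n1, n2, n3]
    linarith [g0, g1, g2, g3]
  -- Combine
  have hsplit : exp y * exp x * exp y - exp z
      = (exp y * exp x * exp y - qy * qx * qy) + (qy * qx * qy - qz) + (qz - exp z) := by
    abel
  rw [hsplit]
  have htr2 := norm_add₃_le (a := exp y * exp x * exp y - qy * qx * qy)
    (b := qy * qx * qy - qz) (c := qz - exp z)
  rw [norm_sub_rev qz (exp z)] at htr2
  have : ‖exp y * exp x * exp y - qy*qx*qy‖ + ‖qy*qx*qy - qz‖ + ‖exp z - qz‖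
      ≤ 2 * (Ea - sa) := by
    have := hEuv
    linarith [bP1, bD, hrz]
  calc ‖_‖ ≤ _ := htr2
    _ ≤ 2 * (Ea - sa) := this
    _ = 2 * (Real.exp (v + 2*u) - (1 + (v+2*u) + (v+2*u)^2/2)) := by rw [hEa, hsa, ha]

end Local

section Pow
variable {𝔄 : Type*} [NormedRing 𝔄]

lemma pow_sub_one_norm_le (T : 𝔄) (σ : ℝ) (hσ : 1 ≤ σ) (hT : ‖T - 1‖ ≤ σ - 1) :
    ∀ j : ℕ, ‖T ^ j - 1‖ ≤ σ ^ j - 1 := by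
  intro j
  induction j with
  | zero => simp
  | succ j ih =>
    have h1 : T ^ (j + 1) - 1 = (T ^ j - 1) * (T - 1) + (T - 1) + (T ^ j - 1) := by
      have : T ^ (j + 1) = T ^ j * T := pow_succ T j
      rw [this]; noncomm_ring
    rw [h1]
    have h2 : ‖(T ^ j - 1) * (T - 1)‖ ≤ (σ ^ j - 1) * (σ - 1) := norm_mul_le_of_le ih hT
    have h3 := norm_add₃_le (a := (T ^ j - 1) * (T - 1)) (b := T - 1) (c := T ^ j - 1)
    have h4 : (σ ^ j - 1) * (σ - 1) + (σ - 1) + (σ ^ j - 1) = σ ^ (j + 1) - 1 := by ring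
    linarith

lemma pow_sub_pow_norm_le (S T : 𝔄) (σ δ : ℝ) (hσ : 1 ≤ σ)
    (hS : ∀ j : ℕ, ‖S ^ j - 1‖ ≤ σ ^ j - 1) (hT : ∀ j : ℕ, ‖T ^ j - 1‖ ≤ σ ^ j - 1)
    (hST : ‖S - T‖ ≤ δ) :
    ∀ m : ℕ, ‖S ^ (m + 1) - T ^ (m + 1)‖ ≤ (m + 1) * σ ^ m * δ := by
  have hδ : 0 ≤ δ := (norm_nonneg _).trans hST
  intro m
  induction m with
  | zero => simpa using hST
  | succ m ih =>
    have e1 : S ^ (m + 2) - T ^ (m + 2) =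
        ((S ^ (m + 1) - 1) * (S - T) + (S - T)) +
          ((S ^ (m + 1) - T ^ (m + 1)) * (T - 1) + (S ^ (m + 1) - T ^ (m + 1))) := by
      have hs : S ^ (m + 2) = S ^ (m + 1) * S := pow_succ S (m + 1)
      have ht : T ^ (m + 2) = T ^ (m + 1) * T := pow_succ T (m + 1)
      rw [hs, ht]; noncomm_ring
    rw [e1]
    have hT1 : ‖T - 1‖ ≤ σ - 1 := by simpa using hT 1
    have b1 : ‖(S ^ (m + 1) - 1) * (S - T)‖ ≤ (σ ^ (m + 1) - 1) * δ :=
      norm_mul_le_of_le (hS (m + 1)) hST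
    have b2 : ‖(S ^ (m + 1) - T ^ (m + 1)) * (T - 1)‖ ≤ ((m + 1 : ℝ) * σ ^ m * δ) * (σ - 1) :=
      norm_mul_le_of_le ih hT1
    have b3 := (norm_add_le ((S ^ (m + 1) - 1) * (S - T) + (S - T))
        ((S ^ (m + 1) - T ^ (m + 1)) * (T - 1) + (S ^ (m + 1) - T ^ (m + 1)))).trans
      (add_le_add (norm_add_le _ _) (norm_add_le _ _))
    have hring : (σ ^ (m + 1) - 1) * δ + δ + ((m + 1 : ℝ) * σ ^ m * δ) * (σ - 1)
        + ((m + 1 : ℝ) * σ ^ m * δ) = ((m + 1 : ℝ) + 1) * σ ^ (m + 1) * δ := by ring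
    have hgoal : (↑(m + 1 + 1) : ℝ) = (m + 1 : ℝ) + 1 := by push_cast; ring
    push_cast
    linarith
end Pow

lemma scalar_tail3 (c : ℝ) (hc : 0 ≤ c) :
    Real.exp c - (1 + c + c ^ 2 / 2) ≤ c ^ 3 / 6 * Real.exp c := by
  have h := tail3_le c hc
  rw [tail_sum_eq 3 c] at h
  have hsum : ∑ k ∈ Finset.range 3, c ^ k / (Nat.factorial k : ℝ) = 1 + c + c ^ 2 / 2 := by
    rw [Finset.sum_range_succ, Finset.sum_range_succ, Finset.sum_range_one]
    norm_num [Nat.factorial]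
  rw [hsum] at h
  linarith

theorem symm_lieTrotter_two (𝕜 : Type*) [RCLike 𝕜] {𝔄 : Type*} [NormedRing 𝔄]
    [NormedAlgebra 𝕜 𝔄] [CompleteSpace 𝔄] (A B : 𝔄) :
    Filter.Tendsto
      (fun n : ℕ =>
        (exp ((2 * n : 𝕜)⁻¹ • B) * exp ((n : 𝕜)⁻¹ • A) * exp ((2 * n : 𝕜)⁻¹ • B)) ^ n)
      Filter.atTop (nhds (exp (A + B))) ∧
    ∀ n : ℕ, 0 < n →
      ‖exp (A + B) -
          (exp ((2 * n : 𝕜)⁻¹ • B) * exp ((n : 𝕜)⁻¹ • A) *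
            exp ((2 * n : 𝕜)⁻¹ • B)) ^ n‖ ≤
        (1 / (3 * (n : ℝ) ^ 2)) * (‖A‖ + ‖B‖) ^ 3 * Real.exp (‖A‖ + ‖B‖) := by
  have hC0 : (0:ℝ) ≤ ‖A‖ + ‖B‖ := by positivity
  have key : ∀ n : ℕ, 0 < n →
      ‖exp (A + B) -
          (exp ((2 * n : 𝕜)⁻¹ • B) * exp ((n : 𝕜)⁻¹ • A) *
            exp ((2 * n : 𝕜)⁻¹ • B)) ^ n‖ ≤
        (1 / (3 * (n : ℝ) ^ 2)) * (‖A‖ + ‖B‖) ^ 3 * Real.exp (‖A‖ + ‖B‖) := by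
    intro n hn
    obtain ⟨m, rfl⟩ : ∃ m, n = m + 1 := ⟨n - 1, by omega⟩
    have hνk : ((m + 1 : ℕ) : 𝕜) ≠ 0 := Nat.cast_ne_zero.2 (by omega)
    have hνr : (0:ℝ) < ((m + 1 : ℕ) : ℝ) := by positivity
    set y : 𝔄 := (2 * ((m + 1 : ℕ) : 𝕜))⁻¹ • B with hy'
    set x : 𝔄 := (((m + 1 : ℕ) : 𝕜))⁻¹ • A with hx'
    set u : ℝ := ‖B‖ / (2 * ((m + 1 : ℕ) : ℝ)) with hu'
    set v : ℝ := ‖A‖ / ((m + 1 : ℕ) : ℝ) with hv'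
    have hun : ‖y‖ ≤ u := by
      refine le_of_eq ?_
      rw [hy', hu', norm_smul, norm_inv, norm_mul, RCLike.norm_two, RCLike.norm_natCast]
      ring
    have hvn : ‖x‖ ≤ v := by
      refine le_of_eq ?_
      rw [hx', hv', norm_smul, norm_inv, RCLike.norm_natCast]
      ring
    have hu0 : 0 ≤ u := (norm_nonneg y).trans hun
    have hv0 : 0 ≤ v := (norm_nonneg x).trans hvn
    set c : ℝ := v + 2 * u with hc'
    have hc0 : 0 ≤ c := by rw [hc']; linarith
    have hcC : ((m + 1 : ℕ) : ℝ) * c = ‖A‖ + ‖B‖ := by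
      rw [hc', hu', hv']
      field_simp
    set z : 𝔄 := (((m + 1 : ℕ) : 𝕜))⁻¹ • (A + B) with hz'
    have hzxyy : x + y + y = z := by
      rw [hx', hy', hz', smul_add]
      have h2 : (2 * ((m + 1 : ℕ) : 𝕜))⁻¹ • B + (2 * ((m + 1 : ℕ) : 𝕜))⁻¹ • B
          = (((m + 1 : ℕ) : 𝕜))⁻¹ • B := by
        rw [← add_smul]
        congr 1
        rw [← two_mul, mul_inv, ← mul_assoc, mul_inv_cancel₀ (two_ne_zero), one_mul]
      rw [add_assoc, h2]
    have hzn : ‖z‖ ≤ c := by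
      rw [← hzxyy]
      refine (norm_add₃_le).trans ?_
      rw [hc']; linarith
    set T : 𝔄 := exp y * exp x * exp y with hT'
    set S : 𝔄 := exp z with hS'
    have hSn : S ^ (m + 1) = exp (A + B) := by
      letI : NormedAlgebra ℚ 𝔄 := NormedAlgebra.restrictScalars ℚ 𝕜 𝔄
      rw [hS', ← exp_nsmul]
      congr 1
      rw [← Nat.cast_smul_eq_nsmul 𝕜, hz', smul_smul, mul_inv_cancel₀ hνk, one_smul]
    set σ : ℝ := Real.exp c with hσ'
    have hσ1 : 1 ≤ σ := Real.one_le_exp hc0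
    have hS1 : ‖S - 1‖ ≤ σ - 1 := exp_sub_one_norm 𝕜 z c hzn
    have hSj := pow_sub_one_norm_le S σ hσ1 hS1
    have hEy : ‖exp y - 1‖ ≤ Real.exp u - 1 := exp_sub_one_norm 𝕜 y u hun
    have hEx : ‖exp x - 1‖ ≤ Real.exp v - 1 := exp_sub_one_norm 𝕜 x v hvn
    have hE3 : Real.exp u * Real.exp v * Real.exp u = σ := by
      rw [hσ', ← Real.exp_add, ← Real.exp_add]
      congr 1
      rw [hc']; ring
    have hT1 : ‖T - 1‖ ≤ σ - 1 := by
      have e : T - 1 = (exp y - 1) * exp x * exp y + (exp x - 1) * exp y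
          + (exp y - 1) := by
        rw [hT']; noncomm_ring
      rw [e]
      have c1 : ‖(exp y - 1) * exp x * exp y‖ ≤ (Real.exp u - 1) * Real.exp v * Real.exp u :=
        mul_exp_norm (𝕜 := 𝕜) y _ hun (mul_exp_norm (𝕜 := 𝕜) x _ hvn hEy)
      have c2 : ‖(exp x - 1) * exp y‖ ≤ (Real.exp v - 1) * Real.exp u :=
        mul_exp_norm (𝕜 := 𝕜) y _ hun hEx
      have c3 := norm_add₃_le (a := (exp y - 1) * exp x * exp y)
        (b := (exp x - 1) * exp y) (c := exp y - 1)
      have hring : (Real.exp u - 1) * Real.exp v * Real.exp u + (Real.exp v - 1) * Real.exp u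
          + (Real.exp u - 1) = Real.exp u * Real.exp v * Real.exp u - 1 := by ring
      linarith
    have hTj := pow_sub_one_norm_le T σ hσ1 hT1
    have hloc := local_err (𝕜 := 𝕜) x y hvn hun
    have hδb : 2 * (Real.exp (v + 2*u) - (1 + (v + 2*u) + (v + 2*u) ^ 2 / 2)) ≤ c ^ 3 / 3 * σ := by
      have h6 := scalar_tail3 c hc0
      rw [hσ']
      rw [hc']
      rw [hc'] at h6
      linarith
    have hST : ‖S - T‖ ≤ c ^ 3 / 3 * σ := by
      calc ‖S - T‖ = ‖T - S‖ := norm_sub_rev _ _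
        _ ≤ c ^ 3 / 3 * σ := by
            rw [hT', hS', ← hzxyy]
            exact hloc.trans hδb
    have main := pow_sub_pow_norm_le S T σ (c ^ 3 / 3 * σ) hσ1 hSj hTj hST m
    rw [hSn] at main
    refine main.trans (le_of_eq ?_)
    have hσn : σ ^ m * σ = Real.exp (‖A‖ + ‖B‖) := by
      rw [← pow_succ, hσ', ← Real.exp_nat_mul, hcC]
    have harith : ((m:ℝ) + 1) * σ ^ m * (c ^ 3 / 3 * σ)
        = (1 / (3 * ((m + 1 : ℕ) : ℝ) ^ 2)) * (‖A‖ + ‖B‖) ^ 3 * Real.exp (‖A‖ + ‖B‖) := by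
      rw [← hσn, ← hcC]
      push_cast
      field_simp
    rw [harith]
  refine ⟨?_, key⟩
  have hbound : ∀ᶠ n : ℕ in atTop,
      ‖(exp ((2 * n : 𝕜)⁻¹ • B) * exp ((n : 𝕜)⁻¹ • A) * exp ((2 * n : 𝕜)⁻¹ • B)) ^ n
        - exp (A + B)‖ ≤ (1 / (3 * (n : ℝ) ^ 2)) * (‖A‖ + ‖B‖) ^ 3 * Real.exp (‖A‖ + ‖B‖) := by
    filter_upwards [eventually_gt_atTop 0] with n hn
    rw [norm_sub_rev]
    exact key n hn
  have hg : Tendsto (fun n : ℕ => (1 / (3 * (n : ℝ) ^ 2)) * (‖A‖ + ‖B‖) ^ 3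
      * Real.exp (‖A‖ + ‖B‖)) atTop (nhds 0) := by
    have h0 := tendsto_one_div_atTop_nhds_zero_nat (𝕜 := ℝ)
    have h1 := (h0.mul h0).const_mul ((‖A‖ + ‖B‖) ^ 3 * Real.exp (‖A‖ + ‖B‖) / 3)
    rw [mul_zero, mul_zero] at h1
    refine h1.congr fun n => ?_
    ring
  rw [← tendsto_sub_nhds_zero_iff]
  exact squeeze_zero_norm' hbound hg
end
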